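/- Let B be a real n×n matrix with det B ≤ 0, let R be the unique symmetric positive semidefinite square root of Bᵀ B, and let λ_min denote the smallest eigenvalue of R. Then the maximum of trace(Qᵀ B) over Q ∈ SO(n) equals trace(R) − 2 λ_min, and Q ∈ SO(n) attains this maximum if and only if Q = U H J Hᵀ for some orthogonal matrix U with det U = −1 and U R = B, and some orthogonal matrix H such that Hᵀ R H is diagonal and the first column of H is an eigenvector of R for the eigenvalue λ_min, where J is the diagonal matrix diag(−1, 1, …, 1). -/

import Mathlib

/-!
Write `S v = 1 - 2 v vᵀ` (`householder v`) for the reflection in `v⊥`. Because `det B ≤ 0`,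
`B = U₀ R` with `U₀` orthogonal of determinant `-1`: if the polar factor has determinant `1`, then
`R` is singular and the polar factor may be composed with the reflection in a kernel vector of `R`.
For `Q ∈ SO(n)` the matrix `W = Qᵀ U₀` is orthogonal of determinant `-1`, so `W v = -v` for a
unit vector `v`, and `W = N S v` with `N` orthogonal fixing `v`; hence
`trace (Qᵀ B) = trace (W R) = trace (N R) - 2 vᵀ R v`. Now
`2 (trace R - trace (N R)) = trace ((1 - N) R (1 - N)ᵀ) ≥ 0`, with equality iff `N R = R`, and
`vᵀ R v - λ_min = vᵀ (R - λ_min) v ≥ 0`, with equality iff `R v = λ_min v`. This gives the bound,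
and at equality `Qᵀ B = S v R`, so `Q = U S v` with `U = Q S v` a polar factor of `B`. Finally
`S v = H J Hᵀ` whenever `H` is orthogonal with first column `v`.
-/

open Matrix

variable {ι : Type*}

def householder [DecidableEq ι] (v : ι → ℝ) : Matrix ι ι ℝ := 1 - (2 : ℝ) • vecMulVec v v

lemma householder_transpose [DecidableEq ι] (v : ι → ℝ) : (householder v)ᵀ = householder v := by
  simp [householder, transpose_vecMulVec]

lemma diagonal_ite_eq_householder_single [DecidableEq ι] (i₀ : ι) :
    diagonal (fun i => if i = i₀ then (-1 : ℝ) else 1) = householder (Pi.single i₀ 1) := by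
  ext i j
  by_cases hij : i = j
  · subst hij
    by_cases hi : i = i₀ <;> norm_num [householder, vecMulVec_apply, hi]
  · rcases eq_or_ne i i₀ with rfl | hi
    · simp [householder, hij, vecMulVec_apply]
    · simp [householder, hij, vecMulVec_apply, Pi.single_eq_of_ne hi]

variable [Fintype ι]

lemma inv_sqrt_smul_dotProduct_self {v : ι → ℝ} (hv : v ≠ 0) :
    ((√(v ⬝ᵥ v))⁻¹ • v) ⬝ᵥ ((√(v ⬝ᵥ v))⁻¹ • v) = 1 := by
  have hpos : 0 < v ⬝ᵥ v := by simpa using dotProduct_star_self_pos_iff.2 hv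
  rw [dotProduct_smul, smul_dotProduct, smul_eq_mul, smul_eq_mul, ← mul_assoc, ← sq, inv_pow,
    Real.sq_sqrt hpos.le, inv_mul_cancel₀ hpos.ne']

lemma exists_dotProduct_self_eq_one_of_mulVec_eq {R : Matrix ι ι ℝ} {v : ι → ℝ} {μ : ℝ}
    (hv : v ≠ 0) (hRv : R *ᵥ v = μ • v) : ∃ w, w ⬝ᵥ w = 1 ∧ R *ᵥ w = μ • w :=
  ⟨_, inv_sqrt_smul_dotProduct_self hv, by rw [mulVec_smul, hRv, smul_comm]⟩

lemma Matrix.IsHermitian.vecMul_eq_mulVec {R : Matrix ι ι ℝ} (hR : R.IsHermitian) (v : ι → ℝ) :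
    v ᵥ* R = R *ᵥ v := by
  rw [← mulVec_transpose, ← conjTranspose_eq_transpose_of_trivial, hR.eq]

variable [DecidableEq ι]

section Householder

variable {v : ι → ℝ}

lemma householder_mul (v : ι → ℝ) (A : Matrix ι ι ℝ) :
    householder v * A = A - (2 : ℝ) • vecMulVec v (v ᵥ* A) := by
  simp [householder, Matrix.sub_mul, vecMulVec_mul]

lemma mul_householder (A : Matrix ι ι ℝ) (v : ι → ℝ) :
    A * householder v = A - (2 : ℝ) • vecMulVec (A *ᵥ v) v := by
  simp [householder, Matrix.mul_sub, mul_vecMulVec]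

lemma householder_mulVec (v x : ι → ℝ) : householder v *ᵥ x = x - (2 * (v ⬝ᵥ x)) • v := by
  rw [householder, sub_mulVec, one_mulVec, smul_mulVec, vecMulVec_mulVec, op_smul_eq_smul,
    smul_smul]

lemma householder_mulVec_self (hv : v ⬝ᵥ v = 1) : householder v *ᵥ v = -v := by
  rw [householder_mulVec, hv]
  module

lemma householder_mul_self (hv : v ⬝ᵥ v = 1) : householder v * householder v = 1 := by
  rw [householder_mul, householder, vecMul_sub, vecMul_smul, vecMul_one, vecMul_vecMulVec, hv,
    one_smul, vecMulVec_sub, vecMulVec_smul]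
  module

lemma householder_mem_orthogonalGroup (hv : v ⬝ᵥ v = 1) :
    householder v ∈ orthogonalGroup ι ℝ := by
  rw [mem_orthogonalGroup_iff', householder_transpose, householder_mul_self hv]

lemma det_householder (hv : v ⬝ᵥ v = 1) : (householder v).det = -1 := by
  have h : householder v = 1 + replicateCol (Fin 1) ((-2 : ℝ) • v) * replicateRow (Fin 1) v := by
    ext i j
    simp [householder, vecMulVec_apply, replicateCol, replicateRow, mul_apply, sub_eq_add_neg,
      mul_assoc]
  rw [h, det_one_add_mul_comm, det_unique]
  norm_num [replicateRow_mul_replicateCol_apply, hv]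

lemma det_mul_householder (A : Matrix ι ι ℝ) (hv : v ⬝ᵥ v = 1) :
    (A * householder v).det = -A.det := by
  rw [det_mul, det_householder hv, mul_neg_one]

lemma commute_householder_of_mulVec_eq {R : Matrix ι ι ℝ} (hR : R.IsHermitian) {μ : ℝ}
    (hRv : R *ᵥ v = μ • v) : Commute (householder v) R := by
  rw [Commute, SemiconjBy, householder_mul, mul_householder, hR.vecMul_eq_mulVec, hRv,
    vecMulVec_smul, smul_vecMulVec]

lemma trace_mul_householder_mul {N : Matrix ι ι ℝ} (hNv : N *ᵥ v = v) (R : Matrix ι ι ℝ) :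
    (N * householder v * R).trace = (N * R).trace - 2 * (v ⬝ᵥ R *ᵥ v) := by
  rw [Matrix.mul_assoc, householder_mul, Matrix.mul_sub, Matrix.mul_smul, mul_vecMulVec, hNv,
    trace_sub, trace_smul, trace_vecMulVec, dotProduct_comm, dotProduct_mulVec, smul_eq_mul]

lemma mul_householder_mul_transpose {H : Matrix ι ι ℝ} (hH : H ∈ orthogonalGroup ι ℝ)
    (v : ι → ℝ) : H * householder v * Hᵀ = householder (H *ᵥ v) := by
  rw [mul_householder, Matrix.sub_mul, Matrix.smul_mul, vecMulVec_mul, vecMul_transpose,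
    (mem_orthogonalGroup_iff ι ℝ).1 hH, householder]

lemma mul_diagonal_mul_transpose_eq_householder {H : Matrix ι ι ℝ}
    (hH : H ∈ orthogonalGroup ι ℝ) (i₀ : ι) :
    H * diagonal (fun i => if i = i₀ then (-1 : ℝ) else 1) * Hᵀ = householder (H.col i₀) := by
  rw [diagonal_ite_eq_householder_single, mul_householder_mul_transpose hH, mulVec_single_one]

lemma exists_householder_mulVec_eq {R : Matrix ι ι ℝ} {μ : ℝ} {u v : ι → ℝ}
    (hu : u ⬝ᵥ u = 1) (hv : v ⬝ᵥ v = 1) (huv : u ≠ v) (hRu : R *ᵥ u = μ • u)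
    (hRv : R *ᵥ v = μ • v) : ∃ w, w ⬝ᵥ w = 1 ∧ R *ᵥ w = μ • w ∧ householder w *ᵥ u = v := by
  have hw := inv_sqrt_smul_dotProduct_self (sub_ne_zero.2 huv)
  set d := u - v
  set s := (√(d ⬝ᵥ d))⁻¹
  -- the reflection in `(u - v)⊥` maps `u` to `v` because `u` and `v` have the same length
  refine ⟨s • d, hw, by rw [mulVec_smul, mulVec_sub, hRu, hRv, ← smul_sub, smul_comm], ?_⟩
  have hs : s * s * (d ⬝ᵥ d) = 1 := by
    rw [smul_dotProduct, dotProduct_smul, smul_eq_mul, smul_eq_mul] at hw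
    linear_combination hw
  have hdu : 2 * (d ⬝ᵥ u) = d ⬝ᵥ d := by
    simp only [d, sub_dotProduct, dotProduct_sub, hu, hv, dotProduct_comm v u]
    ring
  rw [householder_mulVec, smul_dotProduct, smul_eq_mul, smul_smul,
    show 2 * (s * (d ⬝ᵥ u)) * s = 1 by rw [← hs, ← hdu]; ring, one_smul, sub_sub_cancel]

end Householder

section Orthogonal

variable {W : Matrix ι ι ℝ}

lemma Matrix.transpose_mem_orthogonalGroup (hW : W ∈ orthogonalGroup ι ℝ) :
    Wᵀ ∈ orthogonalGroup ι ℝ :=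
  Unitary.star_mem hW

lemma Matrix.det_mul_self_of_mem_orthogonalGroup (hW : W ∈ orthogonalGroup ι ℝ) :
    W.det * W.det = 1 :=
  (Unitary.mem_iff.1 (det_of_mem_unitary hW)).1

lemma Matrix.exists_mulVec_eq_neg_of_det_eq_neg_one (hW : W ∈ orthogonalGroup ι ℝ)
    (hd : W.det = -1) : ∃ v, v ⬝ᵥ v = 1 ∧ W *ᵥ v = -v := by
  have hsing : (W + 1).det = 0 := by
    have h : W * (W + 1)ᵀ = W + 1 := by
      rw [transpose_add, transpose_one, Matrix.mul_add, (mem_orthogonalGroup_iff ι ℝ).1 hW,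
        Matrix.mul_one, add_comm]
    have := congrArg det h
    rw [det_mul, det_transpose, hd] at this
    linarith
  obtain ⟨v, hv, hWv⟩ := exists_mulVec_eq_zero_iff.2 hsing
  rw [add_mulVec, one_mulVec, add_eq_zero_iff_eq_neg, ← neg_one_smul ℝ v] at hWv
  simpa using exists_dotProduct_self_eq_one_of_mulVec_eq hv hWv

lemma Matrix.exists_eq_mul_householder_of_det_eq_neg_one (hW : W ∈ orthogonalGroup ι ℝ)
    (hd : W.det = -1) :
    ∃ v N, v ⬝ᵥ v = 1 ∧ N ∈ orthogonalGroup ι ℝ ∧ N *ᵥ v = v ∧ W = N * householder v := by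
  obtain ⟨v, hv, hWv⟩ := exists_mulVec_eq_neg_of_det_eq_neg_one hW hd
  refine ⟨v, W * householder v, hv, mul_mem hW (householder_mem_orthogonalGroup hv), ?_, ?_⟩
  · rw [← mulVec_mulVec, householder_mulVec_self hv, mulVec_neg, hWv, neg_neg]
  · rw [Matrix.mul_assoc, householder_mul_self hv, Matrix.mul_one]

end Orthogonal

section Rayleigh

variable {R : Matrix ι ι ℝ} {c : ℝ} {v : ι → ℝ}

lemma Matrix.IsHermitian.posSemidef_sub_smul_one (hR : R.IsHermitian)
    (hc : c ∈ lowerBounds {μ | ∃ v : ι → ℝ, v ≠ 0 ∧ R *ᵥ v = μ • v}) :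
    (R - c • 1).PosSemidef := by
  have hRc : (R - c • 1).IsHermitian := hR.sub (isHermitian_one.smul (IsSelfAdjoint.all c))
  rw [hRc.posSemidef_iff_eigenvalues_nonneg]
  intro j
  have h := hRc.mulVec_eigenvectorBasis j
  rw [sub_mulVec, smul_mulVec, one_mulVec, sub_eq_iff_eq_add, ← add_smul] at h
  simpa using hc ⟨_, by simpa using hRc.eigenvectorBasis.orthonormal.ne_zero j, h⟩

lemma dotProduct_sub_smul_one_mulVec (hv : v ⬝ᵥ v = 1) :
    v ⬝ᵥ (R - c • 1) *ᵥ v = v ⬝ᵥ R *ᵥ v - c := by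
  rw [sub_mulVec, smul_mulVec, one_mulVec, dotProduct_sub, dotProduct_smul, hv, smul_eq_mul,
    mul_one]

lemma Matrix.IsHermitian.le_dotProduct_mulVec (hR : R.IsHermitian)
    (hc : c ∈ lowerBounds {μ | ∃ v : ι → ℝ, v ≠ 0 ∧ R *ᵥ v = μ • v}) (hv : v ⬝ᵥ v = 1) :
    c ≤ v ⬝ᵥ R *ᵥ v := by
  have := (hR.posSemidef_sub_smul_one hc).dotProduct_mulVec_nonneg v
  rw [star_trivial, dotProduct_sub_smul_one_mulVec hv] at this
  linarith

lemma Matrix.IsHermitian.mulVec_eq_of_dotProduct_mulVec_eq (hR : R.IsHermitian)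
    (hc : c ∈ lowerBounds {μ | ∃ v : ι → ℝ, v ≠ 0 ∧ R *ᵥ v = μ • v}) (hv : v ⬝ᵥ v = 1)
    (h : v ⬝ᵥ R *ᵥ v = c) : R *ᵥ v = c • v := by
  have := ((hR.posSemidef_sub_smul_one hc).dotProduct_mulVec_zero_iff v).1
    (by rw [star_trivial, dotProduct_sub_smul_one_mulVec hv, h, sub_self])
  rwa [sub_mulVec, smul_mulVec, one_mulVec, sub_eq_zero] at this

end Rayleigh

section TraceBound

variable {N R : Matrix ι ι ℝ}

lemma two_mul_trace_sub_trace_mul (hN : N ∈ orthogonalGroup ι ℝ) (hR : R.IsHermitian) :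
    2 * (R.trace - (N * R).trace) = ((1 - N) * R * (1 - N)ᴴ).trace := by
  have hRN : (R * Nᵀ).trace = (N * R).trace := by
    rw [← trace_transpose, transpose_mul, transpose_transpose,
      ← conjTranspose_eq_transpose_of_trivial, hR.eq]
  have hNRN : (N * R * Nᵀ).trace = R.trace := by
    rw [trace_mul_cycle, (mem_orthogonalGroup_iff' ι ℝ).1 hN, Matrix.one_mul]
  rw [conjTranspose_eq_transpose_of_trivial, transpose_sub, transpose_one]
  simp only [Matrix.sub_mul, Matrix.mul_sub, Matrix.one_mul, Matrix.mul_one, trace_sub, hRN, hNRN]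
  ring

lemma Matrix.PosSemidef.trace_mul_le_trace (hR : R.PosSemidef) (hN : N ∈ orthogonalGroup ι ℝ) :
    (N * R).trace ≤ R.trace := by
  have := (hR.mul_mul_conjTranspose_same (1 - N)).trace_nonneg
  rw [← two_mul_trace_sub_trace_mul hN hR.isHermitian] at this
  linarith

open scoped MatrixOrder in
lemma Matrix.PosSemidef.mul_eq_self_of_trace_mul_eq (hR : R.PosSemidef)
    (hN : N ∈ orthogonalGroup ι ℝ) (h : (N * R).trace = R.trace) : N * R = R := by
  have hzero := ((hR.mul_mul_conjTranspose_same (1 - N)).trace_eq_zero_iff).1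
    (by rw [← two_mul_trace_sub_trace_mul hN hR.isHermitian, h, sub_self, mul_zero])
  obtain ⟨P, rfl⟩ := CStarAlgebra.nonneg_iff_eq_star_mul_self.mp hR.nonneg
  rw [star_eq_conjTranspose] at hzero ⊢
  have hPN : (1 - N) * Pᴴ = 0 := self_mul_conjTranspose_eq_zero.1 <| by
    rw [conjTranspose_mul, conjTranspose_conjTranspose]
    simpa only [Matrix.mul_assoc] using hzero
  have : (1 - N) * (Pᴴ * P) = 0 := by rw [← Matrix.mul_assoc, hPN, Matrix.zero_mul]
  rwa [Matrix.sub_mul, Matrix.one_mul, sub_eq_zero, eq_comm] at this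

end TraceBound

section MinimalEigenvalue

variable {W R : Matrix ι ι ℝ} {c : ℝ}

theorem Matrix.PosSemidef.trace_mul_le_of_det_eq_neg_one (hR : R.PosSemidef)
    (hc : c ∈ lowerBounds {μ | ∃ v : ι → ℝ, v ≠ 0 ∧ R *ᵥ v = μ • v})
    (hW : W ∈ orthogonalGroup ι ℝ) (hd : W.det = -1) :
    (W * R).trace ≤ R.trace - 2 * c := by
  obtain ⟨v, N, hv, hN, hNv, rfl⟩ := exists_eq_mul_householder_of_det_eq_neg_one hW hd
  rw [trace_mul_householder_mul hNv]
  linarith [hR.trace_mul_le_trace hN, hR.isHermitian.le_dotProduct_mulVec hc hv]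

theorem Matrix.PosSemidef.exists_mul_eq_householder_mul_of_trace_mul_eq (hR : R.PosSemidef)
    (hc : c ∈ lowerBounds {μ | ∃ v : ι → ℝ, v ≠ 0 ∧ R *ᵥ v = μ • v})
    (hW : W ∈ orthogonalGroup ι ℝ) (hd : W.det = -1) (h : (W * R).trace = R.trace - 2 * c) :
    ∃ v, v ⬝ᵥ v = 1 ∧ R *ᵥ v = c • v ∧ W * R = householder v * R := by
  obtain ⟨v, N, hv, hN, hNv, rfl⟩ := exists_eq_mul_householder_of_det_eq_neg_one hW hd
  rw [trace_mul_householder_mul hNv] at h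
  have hNR := hR.trace_mul_le_trace hN
  have hvRv := hR.isHermitian.le_dotProduct_mulVec hc hv
  have hRv := hR.isHermitian.mulVec_eq_of_dotProduct_mulVec_eq hc hv (by linarith)
  refine ⟨v, hv, hRv, ?_⟩
  rw [Matrix.mul_assoc, (commute_householder_of_mulVec_eq hR.isHermitian hRv).eq,
    ← Matrix.mul_assoc, hR.mul_eq_self_of_trace_mul_eq hN (by linarith)]

end MinimalEigenvalue

section Eigenbasis

variable {R H : Matrix ι ι ℝ} {d : ι → ℝ}

lemma Matrix.mem_spectrum_of_mulVec_eq {v : ι → ℝ} {μ : ℝ} (hv : v ≠ 0) (hRv : R *ᵥ v = μ • v) :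
    μ ∈ spectrum ℝ R := by
  rw [← spectrum_toLin']
  exact Module.End.HasEigenvalue.mem_spectrum
    (Module.End.hasEigenvalue_of_hasEigenvector ⟨Module.End.mem_eigenspace_iff.2 hRv, hv⟩)

lemma Matrix.col_dotProduct_col_self_of_mem_orthogonalGroup (hH : H ∈ orthogonalGroup ι ℝ)
    (k : ι) : H.col k ⬝ᵥ H.col k = 1 := by
  simpa [mul_apply, dotProduct] using
    congrFun (congrFun ((mem_orthogonalGroup_iff' ι ℝ).1 hH) k) k

lemma mulVec_col_of_mul_eq_mul_diagonal (h : R * H = H * diagonal d) (k : ι) :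
    R *ᵥ H.col k = d k • H.col k := by
  funext i
  have := congrFun (congrFun h i) k
  rw [mul_diagonal, mul_apply] at this
  simpa [mulVec, dotProduct, col, mul_comm] using this

lemma isDiag_transpose_mul_mul_of_mul_eq_mul_diagonal (hH : H ∈ orthogonalGroup ι ℝ)
    (h : R * H = H * diagonal d) : (Hᵀ * R * H).IsDiag := by
  rw [Matrix.mul_assoc, h, ← Matrix.mul_assoc, (mem_orthogonalGroup_iff' ι ℝ).1 hH, Matrix.one_mul]
  exact isDiag_diagonal d

lemma Matrix.IsHermitian.exists_mul_eq_mul_diagonal (hR : R.IsHermitian) :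
    ∃ H ∈ orthogonalGroup ι ℝ, R * H = H * diagonal hR.eigenvalues := by
  refine ⟨hR.eigenvectorUnitary, hR.eigenvectorUnitary.2, ?_⟩
  ext i j
  rw [mul_diagonal, mul_apply]
  simpa [mulVec, dotProduct, mul_comm] using congrFun (hR.mulVec_eigenvectorBasis j) i

lemma exists_mem_orthogonalGroup_commute_mulVec_eq (hR : R.IsHermitian) {μ : ℝ} {u v : ι → ℝ}
    (hu : u ⬝ᵥ u = 1) (hv : v ⬝ᵥ v = 1) (hRu : R *ᵥ u = μ • u) (hRv : R *ᵥ v = μ • v) :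
    ∃ S ∈ orthogonalGroup ι ℝ, Commute S R ∧ S *ᵥ u = v := by
  by_cases huv : u = v
  · exact ⟨1, one_mem _, Commute.one_left R, by rw [one_mulVec, huv]⟩
  · obtain ⟨w, hw, hRw, hwu⟩ := exists_householder_mulVec_eq hu hv huv hRu hRv
    exact ⟨householder w, householder_mem_orthogonalGroup hw,
      commute_householder_of_mulVec_eq hR hRw, hwu⟩

/-- Move a `μ`-eigenvector of an orthonormal eigenbasis to column `i₀`, then map it to `v` by an
orthogonal matrix commuting with `R`. -/
lemma Matrix.IsHermitian.exists_isDiag_col_eq (hR : R.IsHermitian) {v : ι → ℝ} {μ : ℝ}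
    (hv : v ⬝ᵥ v = 1) (hRv : R *ᵥ v = μ • v) (i₀ : ι) :
    ∃ H ∈ orthogonalGroup ι ℝ, (Hᵀ * R * H).IsDiag ∧ H.col i₀ = v := by
  obtain ⟨H₀, hH₀, hRH₀⟩ := hR.exists_mul_eq_mul_diagonal
  obtain ⟨j, hj⟩ : μ ∈ Set.range hR.eigenvalues := by
    rw [← hR.spectrum_real_eq_range_eigenvalues]
    exact mem_spectrum_of_mulVec_eq (v := v) (by rintro rfl; simp at hv) hRv
  generalize hR.eigenvalues = d at hRH₀ hj
  set H₁ := H₀.submatrix id (Equiv.swap i₀ j)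
  have hH₁ : H₁ ∈ orthogonalGroup ι ℝ := by
    rw [mem_orthogonalGroup_iff'] at hH₀ ⊢
    rw [transpose_submatrix, ← submatrix_mul _ _ _ _ _ Function.bijective_id, hH₀,
      submatrix_one_equiv]
  have hRH₁ : R * H₁ = H₁ * diagonal (d ∘ Equiv.swap i₀ j) := by
    rw [← submatrix_id_id R, ← submatrix_mul _ _ _ _ _ Function.bijective_id, hRH₀,
      ← submatrix_diagonal_equiv, submatrix_mul_equiv]
  obtain ⟨S, hS, hSR, hSu⟩ := exists_mem_orthogonalGroup_commute_mulVec_eq hR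
    (col_dotProduct_col_self_of_mem_orthogonalGroup hH₁ i₀) hv
    (by rw [mulVec_col_of_mul_eq_mul_diagonal hRH₁]; simp [hj]) hRv
  have hRSH₁ : R * (S * H₁) = S * H₁ * diagonal (d ∘ Equiv.swap i₀ j) := by
    rw [← Matrix.mul_assoc, ← hSR.eq, Matrix.mul_assoc, hRH₁, Matrix.mul_assoc]
  refine ⟨S * H₁, mul_mem hS hH₁,
    isDiag_transpose_mul_mul_of_mul_eq_mul_diagonal (mul_mem hS hH₁) hRSH₁, ?_⟩
  rw [← mulVec_single_one, ← mulVec_mulVec, mulVec_single_one, hSu]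

end Eigenbasis

section Polar

variable {R B : Matrix ι ι ℝ}

lemma Matrix.mem_orthogonalGroup_of_toEuclideanLin_eq {U : Matrix ι ι ℝ}
    (Φ : EuclideanSpace ℝ ι →ₗᵢ[ℝ] EuclideanSpace ℝ ι) (h : toEuclideanLin U = Φ.toLinearMap) :
    U ∈ orthogonalGroup ι ℝ := by
  rw [mem_orthogonalGroup_iff', ← conjTranspose_eq_transpose_of_trivial]
  apply toEuclideanLin.injective
  rw [toLpLin_mul _ 2, toEuclideanLin_conjTranspose_eq_adjoint, h,
    LinearIsometry.adjoint_comp_self', toLpLin_one]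

lemma Matrix.IsHermitian.norm_toEuclideanLin_eq (hR : R.IsHermitian) (hRR : R * R = Bᵀ * B)
    (x : EuclideanSpace ℝ ι) : ‖toEuclideanLin B x‖ = ‖toEuclideanLin R x‖ := by
  rw [← sq_eq_sq₀ (norm_nonneg _) (norm_nonneg _), ← real_inner_self_eq_norm_sq,
    ← real_inner_self_eq_norm_sq]
  simp only [toLpLin_apply, EuclideanSpace.inner_eq_star_dotProduct, star_trivial]
  calc B *ᵥ x.ofLp ⬝ᵥ B *ᵥ x.ofLp = x.ofLp ⬝ᵥ (Bᵀ * B) *ᵥ x.ofLp := by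
        rw [← mulVec_mulVec, dotProduct_mulVec _ Bᵀ, vecMul_transpose]
    _ = R *ᵥ x.ofLp ⬝ᵥ R *ᵥ x.ofLp := by
        rw [← hRR, ← mulVec_mulVec, dotProduct_mulVec _ R, hR.vecMul_eq_mulVec]

/-- Polar decomposition: `R x ↦ B x` is a well-defined isometry on the range of `R`, which
extends to an isometry of the whole space. -/
lemma Matrix.IsHermitian.exists_mem_orthogonalGroup_mul_eq (hR : R.IsHermitian)
    (hRR : R * R = Bᵀ * B) : ∃ U ∈ orthogonalGroup ι ℝ, U * R = B := by
  set TR := toEuclideanLin R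
  set TB := toEuclideanLin B
  have hnorm : ∀ x, ‖TB x‖ = ‖TR x‖ := hR.norm_toEuclideanLin_eq hRR
  have hker : LinearMap.ker TR ≤ LinearMap.ker TB := fun x hx => by
    rw [LinearMap.mem_ker, ← norm_eq_zero, hnorm, norm_eq_zero]
    exact hx
  let L : LinearMap.range TR →ₗ[ℝ] EuclideanSpace ℝ ι :=
    (LinearMap.ker TR).liftQ TB hker ∘ₗ TR.quotKerEquivRange.symm.toLinearMap
  have hL : ∀ x, L ⟨TR x, LinearMap.mem_range_self TR x⟩ = TB x := fun x => by
    simp [L, LinearMap.quotKerEquivRange_symm_apply_image]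
  let Φ : LinearMap.range TR →ₗᵢ[ℝ] EuclideanSpace ℝ ι :=
    ⟨L, by rintro ⟨_, x, rfl⟩; rw [hL, hnorm]; rfl⟩
  refine ⟨toEuclideanLin.symm Φ.extend.toLinearMap,
    mem_orthogonalGroup_of_toEuclideanLin_eq _ (LinearEquiv.apply_symm_apply _ _), ?_⟩
  apply toEuclideanLin.injective
  ext x : 1
  rw [toLpLin_mul _ 2, LinearEquiv.apply_symm_apply, LinearMap.comp_apply]
  exact (LinearIsometry.extend_apply Φ ⟨TR x, _⟩).trans (hL x)

lemma Matrix.PosSemidef.exists_det_eq_neg_one_mul_eq (hR : R.PosSemidef) (hRR : R * R = Bᵀ * B)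
    (hdet : B.det ≤ 0) : ∃ U ∈ orthogonalGroup ι ℝ, U.det = -1 ∧ U * R = B := by
  obtain ⟨U, hU, hUR⟩ := hR.isHermitian.exists_mem_orthogonalGroup_mul_eq hRR
  rcases mul_self_eq_one_iff.1 (det_mul_self_of_mem_orthogonalGroup hU) with hd | hd
  · -- `det R = det B ≤ 0`, so `R` has a unit kernel vector `w`, and `householder w * R = R`
    have hRdet : R.det = 0 := by
      have := det_mul U R
      rw [hUR, hd, one_mul] at this
      linarith [hR.det_nonneg]
    obtain ⟨w, hw, hRw⟩ := exists_mulVec_eq_zero_iff.2 hRdet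
    obtain ⟨w, hw, hRw⟩ :=
      exists_dotProduct_self_eq_one_of_mulVec_eq hw (hRw.trans (zero_smul ℝ w).symm)
    refine ⟨U * householder w, mul_mem hU (householder_mem_orthogonalGroup hw), ?_, ?_⟩
    · rw [det_mul_householder _ hw, hd]
    · rw [Matrix.mul_assoc, householder_mul, hR.isHermitian.vecMul_eq_mulVec, hRw, zero_smul,
        vecMulVec_zero, smul_zero, sub_zero, hUR]
  · exact ⟨U, hU, hd, hUR⟩

end Polar

lemma trace_transpose_mul_householder_mul {U R B : Matrix ι ι ℝ} (hU : U ∈ orthogonalGroup ι ℝ)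
    (hUR : U * R = B) {v : ι → ℝ} {μ : ℝ} (hv : v ⬝ᵥ v = 1) (hRv : R *ᵥ v = μ • v) :
    ((U * householder v)ᵀ * B).trace = R.trace - 2 * μ := by
  rw [transpose_mul, householder_transpose, ← hUR, Matrix.mul_assoc, ← Matrix.mul_assoc Uᵀ,
    (mem_orthogonalGroup_iff' ι ℝ).1 hU, Matrix.one_mul, ← Matrix.one_mul (householder v),
    trace_mul_householder_mul (one_mulVec v), Matrix.one_mul, hRv, dotProduct_smul, hv,
    smul_eq_mul, mul_one]

section SpecialOrthogonal

variable {Q R B : Matrix ι ι ℝ} {c : ℝ}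

lemma Matrix.PosSemidef.exists_transpose_mul_eq_mul (hR : R.PosSemidef) (hRR : R * R = Bᵀ * B)
    (hdet : B.det ≤ 0) (hQ : Q ∈ orthogonalGroup ι ℝ) (hQdet : Q.det = 1) :
    ∃ W ∈ orthogonalGroup ι ℝ, W.det = -1 ∧ Qᵀ * B = W * R := by
  obtain ⟨U, hU, hdetU, hUR⟩ := hR.exists_det_eq_neg_one_mul_eq hRR hdet
  exact ⟨Qᵀ * U, mul_mem (transpose_mem_orthogonalGroup hQ) hU,
    by rw [det_mul, det_transpose, hQdet, hdetU, one_mul], by rw [Matrix.mul_assoc, hUR]⟩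

theorem Matrix.PosSemidef.trace_transpose_mul_le (hR : R.PosSemidef) (hRR : R * R = Bᵀ * B)
    (hdet : B.det ≤ 0) (hc : c ∈ lowerBounds {μ | ∃ v : ι → ℝ, v ≠ 0 ∧ R *ᵥ v = μ • v})
    (hQ : Q ∈ orthogonalGroup ι ℝ) (hQdet : Q.det = 1) :
    (Qᵀ * B).trace ≤ R.trace - 2 * c := by
  obtain ⟨W, hW, hWdet, hQB⟩ := hR.exists_transpose_mul_eq_mul hRR hdet hQ hQdet
  rw [hQB]
  exact hR.trace_mul_le_of_det_eq_neg_one hc hW hWdet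

theorem Matrix.PosSemidef.exists_mul_householder_mul_eq_of_trace_transpose_mul_eq
    (hR : R.PosSemidef) (hRR : R * R = Bᵀ * B) (hdet : B.det ≤ 0)
    (hc : c ∈ lowerBounds {μ | ∃ v : ι → ℝ, v ≠ 0 ∧ R *ᵥ v = μ • v})
    (hQ : Q ∈ orthogonalGroup ι ℝ) (hQdet : Q.det = 1) (h : (Qᵀ * B).trace = R.trace - 2 * c) :
    ∃ v, v ⬝ᵥ v = 1 ∧ R *ᵥ v = c • v ∧ Q * householder v * R = B := by
  obtain ⟨W, hW, hWdet, hQB⟩ := hR.exists_transpose_mul_eq_mul hRR hdet hQ hQdet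
  rw [hQB] at h
  obtain ⟨v, hv, hRv, hWR⟩ := hR.exists_mul_eq_householder_mul_of_trace_mul_eq hc hW hWdet h
  refine ⟨v, hv, hRv, ?_⟩
  rw [Matrix.mul_assoc, ← hWR, ← hQB, ← Matrix.mul_assoc, (mem_orthogonalGroup_iff ι ℝ).1 hQ,
    Matrix.one_mul]

end SpecialOrthogonal

/-- Part of the paper's Proposition 1 (case `det B ≤ 0`): with `R` the positive
semidefinite square root of `Bᵀ B` and `λ_min` its smallest eigenvalue, the
maximum of `trace(Qᵀ B)` over `Q ∈ SO(n)` is `trace R − 2 λ_min`, attained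
exactly at `Q = U H J Hᵀ` with `U` an orthogonal polar factor of `B` of
determinant `−1`, `H` an orthogonal eigenbasis of `R` whose first column is a
`λ_min`-eigenvector, and `J = diag(−1, 1, …, 1)`. -/
theorem stmt9 {n : ℕ} (hn : 0 < n)
    (B R : Matrix (Fin n) (Fin n) ℝ) (hdet : B.det ≤ 0)
    (hR : R.PosSemidef) (hRR : R * R = Bᵀ * B) (lammin : ℝ)
    (hmin : IsLeast {μ : ℝ | ∃ v : Fin n → ℝ, v ≠ 0 ∧ R.mulVec v = μ • v} lammin) :
    IsGreatest
      {x : ℝ | ∃ Q : Matrix (Fin n) (Fin n) ℝ,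
        Qᵀ * Q = 1 ∧ Q.det = 1 ∧ x = (Qᵀ * B).trace}
      (R.trace - 2 * lammin)
    ∧ ∀ Q : Matrix (Fin n) (Fin n) ℝ, Qᵀ * Q = 1 → Q.det = 1 →
        ((Qᵀ * B).trace = R.trace - 2 * lammin ↔
          ∃ U H : Matrix (Fin n) (Fin n) ℝ,
            Uᵀ * U = 1 ∧ U.det = -1 ∧ U * R = B ∧
            Hᵀ * H = 1 ∧ (Hᵀ * R * H).IsDiag ∧
            R.mulVec (fun i => H i ⟨0, hn⟩) = lammin • (fun i => H i ⟨0, hn⟩) ∧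
            Q = U * H *
                Matrix.diagonal (fun i : Fin n => if i = (⟨0, hn⟩ : Fin n) then (-1 : ℝ) else 1)
                * Hᵀ) := by
  simp only [← mem_orthogonalGroup_iff']
  obtain ⟨U₀, hU₀, hdetU₀, hU₀R⟩ := hR.exists_det_eq_neg_one_mul_eq hRR hdet
  obtain ⟨v₀, hv₀, hRv₀⟩ : ∃ v, v ⬝ᵥ v = 1 ∧ R *ᵥ v = lammin • v :=
    let ⟨_, hv, hRv⟩ := hmin.1
    exists_dotProduct_self_eq_one_of_mulVec_eq hv hRv
  refine ⟨⟨⟨U₀ * householder v₀, mul_mem hU₀ (householder_mem_orthogonalGroup hv₀),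
      by rw [det_mul_householder _ hv₀, hdetU₀, neg_neg],
      (trace_transpose_mul_householder_mul hU₀ hU₀R hv₀ hRv₀).symm⟩, ?_⟩,
    fun Q hQ hQdet => ⟨fun h => ?_, ?_⟩⟩
  · rintro _ ⟨Q, hQ, hQdet, rfl⟩
    exact hR.trace_transpose_mul_le hRR hdet hmin.2 hQ hQdet
  · obtain ⟨v, hv, hRv, hQvR⟩ :=
      hR.exists_mul_householder_mul_eq_of_trace_transpose_mul_eq hRR hdet hmin.2 hQ hQdet h
    obtain ⟨H, hH, hdiag, hcol⟩ := hR.isHermitian.exists_isDiag_col_eq hv hRv ⟨0, hn⟩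
    refine ⟨Q * householder v, H, mul_mem hQ (householder_mem_orthogonalGroup hv),
      by rw [det_mul_householder _ hv, hQdet], hQvR, hH, hdiag, by rwa [← hcol] at hRv, ?_⟩
    rw [Matrix.mul_assoc _ H, Matrix.mul_assoc (Q * householder v),
      mul_diagonal_mul_transpose_eq_householder hH, hcol, Matrix.mul_assoc,
      householder_mul_self hv, Matrix.mul_one]
  · rintro ⟨U, H, hU, -, hUR, hH, -, hRcol, rfl⟩
    rw [Matrix.mul_assoc U H, Matrix.mul_assoc U, mul_diagonal_mul_transpose_eq_householder hH]
    exact trace_transpose_mul_householder_mul hU hUR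
      (col_dotProduct_col_self_of_mem_orthogonalGroup hH _) hRcol
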